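/- Let T be a tree with |V(T)| ≥ 3 and let u be a vertex of T that is not a support vertex of T and has at most one neighbor in T that is not a support vertex of T. Then |𝒟(T)| ≤ 3·|𝒟(T∖u)|, where T∖u is the induced subgraph on V(T) ∖ {u}. -/

import Mathlib

open scoped Classical

/-- The family of all dominating sets of `G`, as a `Finset` of `Finset`s. -/
noncomputable def domSets {V : Type*} [Fintype V] (G : SimpleGraph V) :
    Finset (Finset V) :=
  Finset.univ.filter fun S => ∀ v ∉ S, ∃ u ∈ S, G.Adj u v

/-- The average order of a dominating set of `G`. -/
noncomputable def avd {V : Type*} [Fintype V] (G : SimpleGraph V) : ℚ :=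
  (∑ S ∈ domSets G, (S.card : ℚ)) / ((domSets G).card : ℚ)

/-- A leaf is a vertex of degree one. -/
noncomputable def IsLeaf {V : Type*} [Fintype V] (G : SimpleGraph V) (v : V) : Prop :=
  G.degree v = 1

/-- The set of leaf neighbors of `w` in `G`. -/
noncomputable def leafNbrSet {V : Type*} [Fintype V] (G : SimpleGraph V) (w : V) : Set V :=
  {v | G.Adj w v ∧ IsLeaf G v}

/-- A support vertex is a vertex adjacent to at least one leaf. -/
noncomputable def IsSupport {V : Type*} [Fintype V] (G : SimpleGraph V) (w : V) : Prop :=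
  ∃ v, G.Adj w v ∧ IsLeaf G v

/-!
Send a dominating set `S` of `T` to `S - u`, with `v` added when `u ∈ S`, where `v` is the one
neighbour of `u` that may lack a leaf other than `u`. This dominates `T - u`: a neighbour `x ≠ v`
of `u` has a leaf `ℓ ≠ u`, and `S` contains `ℓ` or `x`. Conversely `S` is determined by its image
together with which of `u ∉ S`, `u, v ∈ S`, or `u ∈ S, v ∉ S` holds.
-/

open Finset

section DomSets

variable {V : Type*} [Fintype V] {G : SimpleGraph V}

lemma mem_domSets {S : Finset V} : S ∈ domSets G ↔ ∀ x ∉ S, ∃ y ∈ S, G.Adj y x := by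
  simp [domSets]

lemma IsLeaf.eq_of_adj {ℓ x y : V} (hℓ : IsLeaf G ℓ) (hx : G.Adj x ℓ) (hy : G.Adj y ℓ) :
    y = x :=
  (SimpleGraph.degree_eq_one_iff_existsUnique_adj.mp hℓ).unique hy.symm hx.symm

lemma subtype_mem_domSets_induce {s : Set V} [DecidablePred (· ∈ s)] {S : Finset V}
    (h : ∀ x ∈ s, x ∉ S → ∃ y ∈ S, y ∈ s ∧ G.Adj y x) :
    S.subtype (· ∈ s) ∈ domSets (G.induce s) := by
  refine mem_domSets.2 fun ⟨x, hx⟩ hxS => ?_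
  obtain ⟨y, hyS, hys, hyx⟩ := h x hx (by simpa using hxS)
  exact ⟨⟨y, hys⟩, by simpa using hyS, hyx⟩

end DomSets

section Transfer

variable {V : Type*} [DecidableEq V] (u v : V)

def transfer (S : Finset V) : Finset V :=
  (if u ∈ S then insert v S else S).erase u

variable {u v} {S : Finset V}

lemma notMem_transfer : u ∉ transfer u v S :=
  notMem_erase u _

lemma mem_transfer_of_ne {y : V} (hyu : y ≠ u) (hy : y ∈ S) : y ∈ transfer u v S := by
  unfold transfer
  split_ifs <;> simp [hyu, hy]

lemma right_mem_transfer (hu : u ∈ S) (hvu : v ≠ u) : v ∈ transfer u v S := by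
  simp [transfer, hu, hvu]

lemma mem_candidates_of_transfer :
    S ∈ ({transfer u v S, insert u (transfer u v S), insert u ((transfer u v S).erase v)} :
      Finset (Finset V)) := by
  by_cases hu : u ∈ S
  · by_cases hv : v ∈ S
    · simp [transfer, hu, hv, insert_erase hu]
    · have hvS : ((insert v S).erase u).erase v = S.erase u := by
        rw [erase_right_comm, erase_insert hv]
      simp [transfer, hu, hvS, insert_erase hu]
  · simp [transfer, hu]

lemma map_subtype_transfer :
    ((transfer u v S).subtype (· ∈ ({u}ᶜ : Set V))).map (Function.Embedding.subtype _) =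
      transfer u v S := by
  rw [subtype_map, filter_true_of_mem]
  exact fun y hy (hyu : y = u) => notMem_transfer (hyu ▸ hy)

end Transfer

section Count

variable {V : Type*} [Fintype V] {G : SimpleGraph V} {u v : V}

lemma transfer_mem_domSets_induce
    (hv : ∀ x, G.Adj u x → x ≠ v → ∃ ℓ ≠ u, G.Adj x ℓ ∧ IsLeaf G ℓ)
    {S : Finset V} (hS : S ∈ domSets G) :
    (transfer u v S).subtype (· ∈ ({u}ᶜ : Set V)) ∈ domSets (G.induce {u}ᶜ) := by
  refine subtype_mem_domSets_induce fun x hxu hx => ?_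
  replace hxu : x ≠ u := hxu
  have hxS : x ∉ S := fun h => hx (mem_transfer_of_ne hxu h)
  obtain ⟨y, hyS, hyx⟩ := mem_domSets.1 hS x hxS
  by_cases hyu : y = u
  · subst hyu
    have hxv : x ≠ v := fun h => hx (h ▸ right_mem_transfer hyS (h ▸ hxu))
    obtain ⟨ℓ, hℓu, hxℓ, hℓ⟩ := hv x hyx hxv
    -- `ℓ ∉ S` could only be dominated by its unique neighbour `x ∉ S`
    have hℓS : ℓ ∈ S := by
      by_contra hℓS
      obtain ⟨z, hzS, hzℓ⟩ := mem_domSets.1 hS ℓ hℓS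
      exact hxS (hℓ.eq_of_adj hxℓ hzℓ ▸ hzS)
    exact ⟨ℓ, mem_transfer_of_ne hℓu hℓS, hℓu, hxℓ.symm⟩
  · exact ⟨y, mem_transfer_of_ne hyu hyS, hyu, hyx⟩

theorem card_domSets_le_three_mul_card_domSets_induce
    (hv : ∀ x, G.Adj u x → x ≠ v → ∃ ℓ ≠ u, G.Adj x ℓ ∧ IsLeaf G ℓ) :
    #(domSets G) ≤ 3 * #(domSets (G.induce {u}ᶜ)) := by
  refine card_le_mul_card_image_of_maps_to
    (fun S hS => transfer_mem_domSets_induce hv hS) 3 fun T _ => ?_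
  let L := T.map (Function.Embedding.subtype _)
  refine (card_le_card (t := {L, insert u L, insert u (L.erase v)}) fun S hS => ?_).trans
    card_le_three
  obtain ⟨-, rfl⟩ := mem_filter.1 hS
  simpa only [L, map_subtype_transfer] using mem_candidates_of_transfer

lemma exists_forall_adj_ne_exists_leaf {u : V}
    (hone : {x | G.Adj u x ∧ ¬ IsSupport G x}.ncard ≤ 1) :
    ∃ v, ∀ x, G.Adj u x → x ≠ v → ∃ ℓ ≠ u, G.Adj x ℓ ∧ IsLeaf G ℓ := by
  by_cases hu : IsLeaf G u
  · obtain ⟨w, hw, -⟩ := SimpleGraph.degree_eq_one_iff_existsUnique_adj.mp hu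
    exact ⟨w, fun x hx hxw => (hxw (hu.eq_of_adj hw.symm hx.symm)).elim⟩
  · have : Nonempty V := ⟨u⟩
    obtain ⟨v, hv⟩ := (Set.ncard_le_one_iff_subset_singleton).mp hone
    refine ⟨v, fun x hx hxv => ?_⟩
    obtain ⟨ℓ, hxℓ, hℓ⟩ : IsSupport G x := by
      by_contra hx'
      exact hxv (hv ⟨hx, hx'⟩)
    exact ⟨ℓ, fun hℓu => hu (hℓu ▸ hℓ), hxℓ, hℓ⟩

end Count

theorem domSets_le_three_general {V : Type*} [Fintype V] (T : SimpleGraph V) (u : V)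
    (hone : {x | T.Adj u x ∧ ¬ IsSupport T x}.ncard ≤ 1) :
    (domSets T).card ≤ 3 * (domSets (T.induce ({u}ᶜ))).card := by
  obtain ⟨v, hv⟩ := exists_forall_adj_ne_exists_leaf hone
  exact card_domSets_le_three_mul_card_domSets_induce hv

/-- If `T` is a tree on at least three vertices and `u` is not a support vertex of `T` and
has at most one non-support neighbor, then `|𝒟(T)| ≤ 3·|𝒟(T∖u)|`. -/
theorem domSets_le_three {V : Type*} [Fintype V] (T : SimpleGraph V)
    (htree : T.IsTree) (hn : 3 ≤ Fintype.card V) (u : V)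
    (hu : ¬ IsSupport T u)
    (hone : {x | T.Adj u x ∧ ¬ IsSupport T x}.ncard ≤ 1) :
    (domSets T).card ≤ 3 * (domSets (T.induce ({u}ᶜ))).card :=
  domSets_le_three_general T u hone
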